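/- For all reals δ ≥ C ≥ 1, (δ/C + 1)^(2C) ≥ δ·e. -/

import Mathlib

open Real

lemma Real.exp_le_four_rpow {t : ℝ} (ht : 0 ≤ t) : exp t ≤ 4 ^ t := by
  rw [← exp_one_rpow]
  gcongr
  linarith [exp_one_lt_d9]

theorem stmt_4 (δ C : ℝ) (hC : 1 ≤ C) (hδ : C ≤ δ) :
    (δ / C + 1) ^ (2 * C) ≥ δ * Real.exp 1 := by
  have hC0 : 0 < C := one_pos.trans_le hC
  set x := δ / C with hx
  have hx1 : 1 ≤ x := (one_le_div hC0).mpr hδ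
  have hx0 : 0 ≤ x := zero_le_one.trans hx1
  calc δ * exp 1 = exp 1 * C * x := by rw [hx]; field_simp
    _ ≤ exp C * x := by gcongr; exact exp_one_mul_le_exp
    _ ≤ 4 ^ C * x ^ C :=
        mul_le_mul (exp_le_four_rpow hC0.le) (self_le_rpow_of_one_le hx1 hC) hx0 (by positivity)
    _ = (4 * x) ^ C := (mul_rpow (by norm_num) hx0).symm
    _ ≤ ((x + 1) ^ 2) ^ C := by gcongr; simpa using four_mul_le_sq_add x 1
    _ = (x + 1) ^ (2 * C) := by rw [← rpow_natCast, ← rpow_mul (by positivity)]; norm_num
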